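/- Let 0 < p ≤ 1, c > 0, β > 0, and J_x, J_y, J_z, w_x, w_y, w_z ∈ ℝ. There exist a constant C > 0 and a natural number L₀, depending only on p and c, with the following property. For every L ≥ L₀ and every simple graph G on Fin L with N_E edges satisfying |e_G(S) − p·|S|·(|S|−1)/2| ≤ c·L^{3/2} for all S ⊆ Fin L, one has |f(H(G)) − f(H(K_L))| ≤ C·(|J_x| + |J_y| + |J_z|)·L^{−1/2}, where for a simple graph G' with N'_E ≥ 1 edges H(G') = (L/N'_E)·Σ_{{v,v'} ∈ E(G')} Σ_{α ∈ {x,y,z}} J_α·σ^α_v·σ^α_{v'} + Σ_{v} Σ_{α ∈ {x,y,z}} w_α·σ^α_v, K_L is the complete graph on Fin L, and f(X) = −(1/(L·β))·log(Tr(exp(−β·X))). -/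

import Mathlib

open Matrix Finset

/-- The Pauli matrices: `0 ↦ σˣ`, `1 ↦ σʸ`, `2 ↦ σᶻ`. -/
def pauli : Fin 3 → Matrix (Fin 2) (Fin 2) ℂ
  | 0 => !![0, 1; 1, 0]
  | 1 => !![0, -Complex.I; Complex.I, 0]
  | 2 => !![1, 0; 0, -1]

/-- `σ^α_v`: the Kronecker product of `L` two-by-two factors (acting on the `2^L`
dimensional Hilbert space of `L` spin-1/2s, indexed by `Fin L → Fin 2`), with the Pauli
matrix `pauli α` in position `v` and the `2 × 2` identity in every other position. -/
def pauliSite (L : ℕ) (α : Fin 3) (v : Fin L) :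
    Matrix (Fin L → Fin 2) (Fin L → Fin 2) ℂ :=
  fun x y => ∏ u, if u = v then pauli α (x u) (y u) else (if x u = y u then 1 else 0)

/-- The two-body interaction `Σ_α J_α·σ^α_v·σ^α_w` of an edge `{v,w}`, written in the
manifestly symmetric form `(A·B + B·A)/2` (for `v ≠ w` the two factors commute, so this
is equal to `Σ_α J_α·σ^α_v·σ^α_w`), so that it can be summed over unordered edges. -/
noncomputable def edgeTerm (L : ℕ) (J : Fin 3 → ℝ) (v w : Fin L) :
    Matrix (Fin L → Fin 2) (Fin L → Fin 2) ℂ :=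
  ∑ α, (J α : ℂ) •
    ((2 : ℂ)⁻¹ • (pauliSite L α v * pauliSite L α w + pauliSite L α w * pauliSite L α v))

lemma edgeTerm_symm (L : ℕ) (J : Fin 3 → ℝ) (v w : Fin L) :
    edgeTerm L J v w = edgeTerm L J w v :=
  Finset.sum_congr rfl fun α _ => by rw [add_comm]

/-- The spin-1/2 Hamiltonian of Eq. (1) on a simple graph `G` on `Fin L` with `N_E` edges:
`H(G) = (L/N_E)·Σ_{{v,v'}∈E(G)} Σ_α J_α·σ^α_v·σ^α_{v'} + Σ_v Σ_α w_α·σ^α_v`. -/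
noncomputable def ham (L : ℕ) (J w : Fin 3 → ℝ) (G : SimpleGraph (Fin L))
    [DecidableRel G.Adj] : Matrix (Fin L → Fin 2) (Fin L → Fin 2) ℂ :=
  ((L : ℂ) / (G.edgeFinset.card : ℂ)) •
      (∑ e ∈ G.edgeFinset, Sym2.lift ⟨edgeTerm L J, edgeTerm_symm L J⟩ e)
    + ∑ v, ∑ α, (w α : ℂ) • pauliSite L α v

/-- `edgesWithin L G S` is `e_G(S)`, the number of edges of `G` with both endpoints
in the subset `S`. -/
def edgesWithin (L : ℕ) (G : SimpleGraph (Fin L)) [DecidableRel G.Adj]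
    (S : Finset (Fin L)) : ℕ :=
  (G.edgeFinset.filter fun e => ∀ v ∈ e, v ∈ S).card

/-- The free-energy density `f(X) = −(1/(L·β))·log(Tr(exp(−β·X)))` of a matrix `X`
(the trace of the exponential of a Hermitian matrix is a positive real, and we take
the real part of the trace and the real logarithm). -/
noncomputable def freeEnergy (L : ℕ) (β : ℝ) {n : Type*} [Fintype n] [DecidableEq n]
    (X : Matrix n n ℂ) : ℝ :=
  -(1 / (L * β)) * Real.log ((NormedSpace.exp ((-β : ℂ) • X)).trace).re

namespace CutReg
open scoped ComplexOrder

/-! ### Kronecker-product layer -/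

def kron (L : ℕ) (A : Fin L → Matrix (Fin 2) (Fin 2) ℂ) :
    Matrix (Fin L → Fin 2) (Fin L → Fin 2) ℂ :=
  Matrix.of fun x y => ∏ u, A u (x u) (y u)

lemma kron_apply {L : ℕ} (A : Fin L → Matrix (Fin 2) (Fin 2) ℂ) (x y : Fin L → Fin 2) :
    kron L A x y = ∏ u, A u (x u) (y u) := rfl

lemma kron_mul {L : ℕ} (A B : Fin L → Matrix (Fin 2) (Fin 2) ℂ) :
    kron L A * kron L B = kron L (fun u => A u * B u) := by
  ext x y
  simp only [Matrix.mul_apply, kron_apply]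
  rw [Fintype.prod_sum (f := fun (u : Fin L) (j : Fin 2) => A u (x u) j * B u j (y u))]
  exact Finset.sum_congr rfl fun z _ => (Finset.prod_mul_distrib).symm

lemma kron_conjTranspose {L : ℕ} (A : Fin L → Matrix (Fin 2) (Fin 2) ℂ) :
    (kron L A)ᴴ = kron L (fun u => (A u)ᴴ) := by
  ext x y
  simp [kron_apply, Matrix.conjTranspose_apply, map_prod]

lemma kron_diagonal {L : ℕ} (d : Fin L → Fin 2 → ℂ) :
    kron L (fun u => Matrix.diagonal (d u)) = Matrix.diagonal (fun x => ∏ u, d u (x u)) := by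
  ext x y
  by_cases h : x = y
  · subst h; simp [kron_apply, Matrix.diagonal_apply_eq]
  · obtain ⟨u, hu⟩ := Function.ne_iff.mp h
    rw [kron_apply, Matrix.diagonal_apply_ne _ h]
    exact Finset.prod_eq_zero (Finset.mem_univ u) (Matrix.diagonal_apply_ne _ hu)

lemma kron_one {L : ℕ} : kron L (fun _ => (1 : Matrix (Fin 2) (Fin 2) ℂ)) = 1 := by
  rw [show (1 : Matrix (Fin 2) (Fin 2) ℂ) = Matrix.diagonal (fun _ => 1) by simp,
    kron_diagonal]
  simp

lemma pauliSite_eq_kron (L : ℕ) (α : Fin 3) (v : Fin L) :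
    pauliSite L α v = kron L (fun u => if u = v then pauli α else 1) := by
  ext x y
  rw [pauliSite, kron_apply]
  exact Finset.prod_congr rfl fun u _ => by split <;> simp [Matrix.one_apply]

/-! ### The 2×2 diagonalizing unitaries -/

noncomputable def Wu : Fin 3 → Matrix (Fin 2) (Fin 2) ℂ
  | 0 => ((Real.sqrt 2 : ℂ))⁻¹ • !![1, 1; 1, -1]
  | 1 => ((Real.sqrt 2 : ℂ))⁻¹ • !![1, 1; Complex.I, -Complex.I]
  | 2 => 1

def sg : Fin 2 → ℝ := ![1, -1]

noncomputable def Dz : Matrix (Fin 2) (Fin 2) ℂ := Matrix.diagonal (fun i => (sg i : ℂ))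

lemma Dz_eq : Dz = !![1, 0; 0, -1] := by
  ext i j
  fin_cases i <;> fin_cases j <;> simp [Dz, sg, Matrix.diagonal_apply]

set_option maxHeartbeats 1000000 in
lemma Wu_unitary (α : Fin 3) : (Wu α)ᴴ * Wu α = 1 ∧ Wu α * (Wu α)ᴴ = 1 := by
  have h2 : Real.sqrt 2 * Real.sqrt 2 = 2 := Real.mul_self_sqrt (by norm_num)
  fin_cases α <;> constructor <;>
    · ext i j
      fin_cases i <;> fin_cases j <;>
        simp [Wu, Matrix.mul_apply, Fin.sum_univ_two, Matrix.one_apply,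
          Matrix.conjTranspose_apply]
      all_goals try field_simp
      all_goals try norm_num [Complex.ext_iff]
      all_goals rw [← Complex.ofReal_pow, Real.sq_sqrt (by norm_num)]; simp

set_option maxHeartbeats 1000000 in
lemma pauli_eq (α : Fin 3) : pauli α = Wu α * Dz * (Wu α)ᴴ := by
  have h2 : Real.sqrt 2 * Real.sqrt 2 = 2 := Real.mul_self_sqrt (by norm_num)
  rw [Dz_eq]
  fin_cases α <;>
    · ext i j
      fin_cases i <;> fin_cases j <;>
        simp [Wu, pauli, Matrix.mul_apply, Fin.sum_univ_two, Matrix.one_apply,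
          Matrix.conjTranspose_apply]
      all_goals try field_simp
      all_goals try norm_num [Complex.ext_iff]
      all_goals rw [← Complex.ofReal_pow, Real.sq_sqrt (by norm_num)]; simp

/-! ### The conjugated-diagonal calculus -/

noncomputable def calW (L : ℕ) (α : Fin 3) : Matrix (Fin L → Fin 2) (Fin L → Fin 2) ℂ :=
  kron L (fun _ => Wu α)

noncomputable def conjE (L : ℕ) (α : Fin 3) (d : (Fin L → Fin 2) → ℝ) :
    Matrix (Fin L → Fin 2) (Fin L → Fin 2) ℂ :=
  calW L α * Matrix.diagonal (fun x => (d x : ℂ)) * (calW L α)ᴴ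

lemma calW_mul_star (L : ℕ) (α : Fin 3) : calW L α * (calW L α)ᴴ = 1 := by
  rw [calW, kron_conjTranspose, kron_mul]
  simp [(Wu_unitary α).2, kron_one]

lemma calW_star_mul (L : ℕ) (α : Fin 3) : (calW L α)ᴴ * calW L α = 1 := by
  rw [calW, kron_conjTranspose, kron_mul]
  simp [(Wu_unitary α).1, kron_one]

lemma conjE_congr {L : ℕ} (α : Fin 3) {d d' : (Fin L → Fin 2) → ℝ} (h : ∀ x, d x = d' x) :
    conjE L α d = conjE L α d' := by
  unfold conjE; rw [funext h]

lemma conjE_mul {L : ℕ} (α : Fin 3) (d d' : (Fin L → Fin 2) → ℝ) :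
    conjE L α d * conjE L α d' = conjE L α (fun x => d x * d' x) := by
  unfold conjE
  have h : calW L α * diagonal (fun x => (d x : ℂ)) * (calW L α)ᴴ *
      (calW L α * diagonal (fun x => (d' x : ℂ)) * (calW L α)ᴴ)
      = calW L α * (diagonal (fun x => (d x : ℂ)) * ((calW L α)ᴴ * calW L α) *
        diagonal (fun x => (d' x : ℂ))) * (calW L α)ᴴ := by
    simp only [Matrix.mul_assoc]
  rw [h, calW_star_mul, Matrix.mul_one, Matrix.diagonal_mul_diagonal,
    show (fun x => (d x : ℂ) * (d' x : ℂ)) = fun x => ((d x * d' x : ℝ) : ℂ) from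
      funext fun x => by push_cast; ring]

lemma conjE_sub {L : ℕ} (α : Fin 3) (d d' : (Fin L → Fin 2) → ℝ) :
    conjE L α d - conjE L α d' = conjE L α (fun x => d x - d' x) := by
  unfold conjE
  rw [← Matrix.sub_mul, ← Matrix.mul_sub, Matrix.diagonal_sub,
    show (fun x => (d x : ℂ) - (d' x : ℂ)) = fun x => ((d x - d' x : ℝ) : ℂ) from
      funext fun x => by push_cast; ring]

lemma conjE_add {L : ℕ} (α : Fin 3) (d d' : (Fin L → Fin 2) → ℝ) :
    conjE L α d + conjE L α d' = conjE L α (fun x => d x + d' x) := by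
  unfold conjE
  rw [← Matrix.add_mul, ← Matrix.mul_add, Matrix.diagonal_add,
    show (fun x => (d x : ℂ) + (d' x : ℂ)) = fun x => ((d x + d' x : ℝ) : ℂ) from
      funext fun x => by push_cast; ring]

lemma conjE_smul {L : ℕ} (α : Fin 3) (r : ℝ) (d : (Fin L → Fin 2) → ℝ) :
    (r : ℂ) • conjE L α d = conjE L α (fun x => r * d x) := by
  unfold conjE
  rw [← Matrix.smul_mul, ← Matrix.mul_smul, ← Matrix.diagonal_smul,
    show ((r:ℂ) • fun x => (d x : ℂ)) = fun x => ((r * d x : ℝ) : ℂ) from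
      funext fun x => by push_cast; simp]

lemma conjE_sum {L : ℕ} {ι : Type*} (s : Finset ι) (α : Fin 3)
    (d : ι → (Fin L → Fin 2) → ℝ) :
    ∑ i ∈ s, conjE L α (d i) = conjE L α (fun x => ∑ i ∈ s, d i x) := by
  classical
  induction s using Finset.induction with
  | empty =>
      simp only [Finset.sum_empty]
      rw [show (conjE L α fun _ => (0:ℝ)) = calW L α * diagonal (fun _ => (0:ℂ)) * (calW L α)ᴴ
        by unfold conjE; norm_num]
      simp
  | insert _ _ h ih =>
      rw [Finset.sum_insert h, ih]
      unfold conjE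
      rw [← Matrix.add_mul, ← Matrix.mul_add, Matrix.diagonal_add,
        show (fun x => (d _ x : ℂ) + ((∑ i ∈ _, d i x : ℝ) : ℂ))
            = fun x => ((∑ i ∈ insert _ _, d i x : ℝ) : ℂ) from
          funext fun x => by rw [Finset.sum_insert h]; push_cast; ring]

lemma conjE_const {L : ℕ} (α : Fin 3) (r : ℝ) :
    conjE L α (fun _ => r) = (r : ℂ) • 1 := by
  unfold conjE
  rw [show (diagonal (fun _ : Fin L → Fin 2 => ((r:ℝ) : ℂ))) = (r : ℂ) • 1 by
    ext i j; by_cases hij : i = j <;>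
      simp [hij, Matrix.one_apply, Matrix.diagonal_apply]]
  rw [Matrix.mul_smul, Matrix.mul_one, Matrix.smul_mul, calW_mul_star]

lemma diag_coe_herm {L : ℕ} (d : (Fin L → Fin 2) → ℝ) :
    (Matrix.diagonal (fun x => (d x : ℂ)))ᴴ = Matrix.diagonal (fun x => (d x : ℂ)) := by
  rw [Matrix.diagonal_conjTranspose,
    show (star fun x => (d x : ℂ)) = fun x => (d x : ℂ) from
      funext fun x => by simp [Pi.star_apply, Complex.conj_ofReal]]

lemma conjE_herm {L : ℕ} (α : Fin 3) (d : (Fin L → Fin 2) → ℝ) :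
    (conjE L α d).IsHermitian := by
  unfold Matrix.IsHermitian conjE
  rw [Matrix.conjTranspose_mul, Matrix.conjTranspose_mul, Matrix.conjTranspose_conjTranspose,
    diag_coe_herm, Matrix.mul_assoc]

lemma conjE_psd {L : ℕ} (α : Fin 3) (d : (Fin L → Fin 2) → ℝ) (h : ∀ x, 0 ≤ d x) :
    (conjE L α d).PosSemidef := by
  unfold conjE
  exact (Matrix.PosSemidef.diagonal (fun x => Complex.zero_le_real.mpr (h x))
    ).mul_mul_conjTranspose_same _

lemma pauliSite_conj {L : ℕ} (α : Fin 3) (v : Fin L) :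
    pauliSite L α v = conjE L α (fun x => sg (x v)) := by
  have hd : (Matrix.diagonal fun x : Fin L → Fin 2 => ((sg (x v) : ℝ) : ℂ))
      = kron L (fun u => if u = v then Dz else 1) := by
    rw [show (fun u : Fin L => if u = v then Dz else 1)
        = fun u => Matrix.diagonal (fun i => if u = v then ((sg i : ℝ):ℂ) else 1) from
      funext fun u => by split <;> simp [Dz], kron_diagonal]
    refine congrArg _ (funext fun x => ?_)
    rw [show (∏ u, if u = v then ((sg (x u):ℝ):ℂ) else 1)
        = _ from Finset.prod_ite_eq' Finset.univ v (fun u => ((sg (x u) : ℝ) : ℂ))]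
    simp
  rw [pauliSite_eq_kron, conjE, calW, hd, kron_conjTranspose, kron_mul, kron_mul]
  exact congrArg _ (funext fun u => by
    split
    · rw [pauli_eq]
    · simp [(Wu_unitary α).2])

/-! ### Decomposition of the Hamiltonian -/

def pairFn (L : ℕ) (v w : Fin L) : (Fin L → Fin 2) → ℝ := fun x => sg (x v) * sg (x w)

lemma pairFn_symm (L : ℕ) (v w : Fin L) : pairFn L v w = pairFn L w v := by
  funext x; rw [pairFn, pairFn, mul_comm]

def pairS {L : ℕ} : Sym2 (Fin L) → (Fin L → Fin 2) → ℝ :=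
  Sym2.lift ⟨pairFn L, pairFn_symm L⟩

noncomputable def edgeFn {L : ℕ} (G : SimpleGraph (Fin L)) [DecidableRel G.Adj] :
    (Fin L → Fin 2) → ℝ := fun x => ∑ e ∈ G.edgeFinset, pairS e x

noncomputable def hamF (L : ℕ) (J w : Fin 3 → ℝ) (G : SimpleGraph (Fin L))
    [DecidableRel G.Adj] (α : Fin 3) : (Fin L → Fin 2) → ℝ :=
  fun x => ((L : ℝ) / (G.edgeFinset.card : ℝ)) * (J α * edgeFn G x)
    + w α * ∑ v, sg (x v)

lemma edgeTerm_eq {L : ℕ} (J : Fin 3 → ℝ) (v w : Fin L) :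
    edgeTerm L J v w = ∑ α, conjE L α (fun x => J α * pairFn L v w x) := by
  unfold edgeTerm
  refine Finset.sum_congr rfl fun α _ => ?_
  rw [pauliSite_conj, pauliSite_conj, conjE_mul, conjE_mul,
    conjE_congr α (d := fun x => sg (x w) * sg (x v)) (d' := pairFn L v w)
      (fun x => mul_comm _ _),
    conjE_congr α (d := fun x => sg (x v) * sg (x w)) (d' := pairFn L v w)
      (fun x => rfl),
    show (conjE L α (pairFn L v w) + conjE L α (pairFn L v w)) = (2:ℂ) • conjE L α (pairFn L v w)
      from (two_smul ℂ _).symm,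
    smul_smul, smul_smul,
    show ((J α : ℂ) * 2⁻¹ * 2) = ((J α : ℝ) : ℂ) by push_cast; ring,
    conjE_smul]

lemma lift_edgeTerm_eq {L : ℕ} (J : Fin 3 → ℝ) (e : Sym2 (Fin L)) :
    Sym2.lift ⟨edgeTerm L J, edgeTerm_symm L J⟩ e
      = ∑ α, conjE L α (fun x => J α * pairS e x) := by
  induction e using Sym2.ind with
  | _ v w =>
      rw [Sym2.lift_mk]
      show edgeTerm L J v w = _
      rw [edgeTerm_eq]
      exact Finset.sum_congr rfl fun α _ =>
        conjE_congr α fun x => by rw [pairS, Sym2.lift_mk]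

lemma ham_eq {L : ℕ} (J w : Fin 3 → ℝ) (G : SimpleGraph (Fin L)) [DecidableRel G.Adj] :
    ham L J w G = ∑ α, conjE L α (hamF L J w G α) := by
  unfold ham
  have h1 : (∑ e ∈ G.edgeFinset, Sym2.lift ⟨edgeTerm L J, edgeTerm_symm L J⟩ e)
      = ∑ α, conjE L α (fun x => J α * edgeFn G x) := by
    rw [Finset.sum_congr rfl (fun e _ => lift_edgeTerm_eq J e), Finset.sum_comm]
    refine Finset.sum_congr rfl fun α _ => ?_
    rw [conjE_sum]
    exact conjE_congr α fun x => by rw [edgeFn, Finset.mul_sum]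
  have h2 : (∑ v, ∑ α, (w α : ℂ) • pauliSite L α v)
      = ∑ α, conjE L α (fun x => w α * ∑ v, sg (x v)) := by
    rw [Finset.sum_comm]
    refine Finset.sum_congr rfl fun α _ => ?_
    rw [Finset.sum_congr rfl (fun v _ => by rw [pauliSite_conj (L := L) α v, conjE_smul]),
      conjE_sum]
    exact conjE_congr α fun x => by rw [Finset.mul_sum]
  rw [h1, h2, Finset.smul_sum, ← Finset.sum_add_distrib]
  refine Finset.sum_congr rfl fun α _ => ?_
  rw [show ((L : ℂ) / (G.edgeFinset.card : ℂ)) = (((L : ℝ) / (G.edgeFinset.card : ℝ) : ℝ) : ℂ)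
    by push_cast; rfl]
  rw [conjE_smul, conjE_add]
  rfl

/-! ### Hermitian / PSD sums -/

lemma isHermitian_sum {n : Type*} [Fintype n] [DecidableEq n] {ι : Type*} (s : Finset ι)
    (f : ι → Matrix n n ℂ) (h : ∀ i ∈ s, (f i).IsHermitian) :
    (∑ i ∈ s, f i).IsHermitian := by
  unfold Matrix.IsHermitian at *
  rw [Matrix.conjTranspose_sum]
  exact Finset.sum_congr rfl h

lemma posSemidef_sum {n : Type*} [Fintype n] [DecidableEq n] {ι : Type*} (s : Finset ι)
    (f : ι → Matrix n n ℂ) (h : ∀ i ∈ s, (f i).PosSemidef) :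
    (∑ i ∈ s, f i).PosSemidef := by
  classical
  induction s using Finset.induction with
  | empty => simpa using Matrix.PosSemidef.zero
  | insert _ _ hni ih =>
      rw [Finset.sum_insert hni]
      exact ((h _ (Finset.mem_insert_self _ _)).add
        (ih fun i hi => h i (Finset.mem_insert_of_mem hi)))
variable {n : Type*} [Fintype n] [DecidableEq n]

noncomputable def evU {M : Matrix n n ℂ} (hM : M.IsHermitian) : Matrix n n ℂ :=
  (Matrix.IsHermitian.eigenvectorUnitary hM : Matrix n n ℂ)

lemma evU_star_mul {M : Matrix n n ℂ} (hM : M.IsHermitian) : star (evU hM) * evU hM = 1 :=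
  ((Unitary.mem_iff).mp (Matrix.IsHermitian.eigenvectorUnitary hM).2).1

lemma evU_mul_star {M : Matrix n n ℂ} (hM : M.IsHermitian) : evU hM * star (evU hM) = 1 :=
  ((Unitary.mem_iff).mp (Matrix.IsHermitian.eigenvectorUnitary hM).2).2

lemma evU_inv {M : Matrix n n ℂ} (hM : M.IsHermitian) : (evU hM)⁻¹ = star (evU hM) :=
  Matrix.inv_eq_left_inv (evU_star_mul hM)

lemma evU_isUnit {M : Matrix n n ℂ} (hM : M.IsHermitian) : IsUnit (evU hM) :=
  ⟨⟨evU hM, star (evU hM), evU_mul_star hM, evU_star_mul hM⟩, rfl⟩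

lemma exp_hermitian {M : Matrix n n ℂ} (hM : M.IsHermitian) :
    NormedSpace.exp M
      = evU hM * Matrix.diagonal (fun i => ((Real.exp (hM.eigenvalues i) : ℝ) : ℂ))
        * star (evU hM) := by
  conv_lhs => rw [hM.spectral_theorem, Unitary.conjStarAlgAut_apply]
  rw [show (Matrix.IsHermitian.eigenvectorUnitary hM : Matrix n n ℂ) = evU hM from rfl,
    ← evU_inv hM, Matrix.exp_conj (evU hM) _ (evU_isUnit hM), Matrix.exp_diagonal, evU_inv hM]
  refine congrArg₂ HMul.hMul (congrArg₂ HMul.hMul rfl (congrArg _ (funext fun i => ?_))) rfl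
  rw [Pi.exp_def]
  show NormedSpace.exp ((hM.eigenvalues i : ℝ) : ℂ) = _
  rw [← Complex.exp_eq_exp_ℂ, ← Complex.ofReal_exp]

/-- entry of a conjugated real diagonal matrix -/
lemma conj_diag_entry (U : Matrix n n ℂ) (d : n → ℝ) (k : n) :
    ((U * Matrix.diagonal (fun j => ((d j : ℝ) : ℂ)) * star U) k k)
      = ((∑ j, Complex.normSq (U k j) * d j : ℝ) : ℂ) := by
  rw [Matrix.mul_apply]
  push_cast
  refine Finset.sum_congr rfl fun j _ => ?_
  rw [Matrix.mul_diagonal, Matrix.star_apply]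
  have hz : U k j * star (U k j) = ((Complex.normSq (U k j) : ℝ) : ℂ) := Complex.mul_conj _
  calc U k j * (d j : ℂ) * star (U k j) = (U k j * star (U k j)) * (d j : ℂ) := by ring
    _ = ((Complex.normSq (U k j) : ℝ) : ℂ) * (d j : ℂ) := by rw [hz]

lemma normSq_row_sum {M : Matrix n n ℂ} (hM : M.IsHermitian) (k : n) :
    ∑ j, Complex.normSq (evU hM k j) = 1 := by
  have h1 : evU hM * Matrix.diagonal (fun _ : n => ((1:ℝ):ℂ)) * star (evU hM) = 1 := by
    rw [show Matrix.diagonal (fun _ : n => ((1:ℝ):ℂ)) = (1 : Matrix n n ℂ) by norm_num,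
      Matrix.mul_one, evU_mul_star hM]
  have h2 : (evU hM * Matrix.diagonal (fun _ : n => ((1:ℝ):ℂ)) * star (evU hM)) k k
      = (1 : Matrix n n ℂ) k k := by rw [h1]
  rw [conj_diag_entry (evU hM) (fun _ => (1:ℝ)) k, Matrix.one_apply_eq] at h2
  have h3 := congrArg Complex.re h2
  simpa using h3

lemma trace_exp_eq {M : Matrix n n ℂ} (hM : M.IsHermitian) :
    (NormedSpace.exp M).trace = ((∑ i, Real.exp (hM.eigenvalues i) : ℝ) : ℂ) := by
  rw [exp_hermitian hM, Matrix.trace_mul_cycle, evU_star_mul hM,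
    Matrix.one_mul, Matrix.trace_diagonal]
  push_cast
  rfl

lemma trace_exp_re_pos [Nonempty n] {M : Matrix n n ℂ} (hM : M.IsHermitian) :
    0 < (NormedSpace.exp M).trace.re := by
  rw [trace_exp_eq hM, Complex.ofReal_re]
  exact Finset.sum_pos (fun i _ => Real.exp_pos _) Finset.univ_nonempty

/-- Peierls inequality -/
lemma peierls {C : Matrix n n ℂ} (hC : C.IsHermitian) :
    ∑ k, Real.exp ((C k k).re) ≤ (NormedSpace.exp C).trace.re := by
  have hdiag : ∀ k, (C k k).re = ∑ j, Complex.normSq (evU hC k j) * hC.eigenvalues j := by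
    intro k
    conv_lhs => rw [hC.spectral_theorem, Unitary.conjStarAlgAut_apply]
    have : (Matrix.diagonal (RCLike.ofReal ∘ hC.eigenvalues) : Matrix n n ℂ)
        = Matrix.diagonal (fun j => ((hC.eigenvalues j : ℝ) : ℂ)) := rfl
    rw [this, show (Matrix.IsHermitian.eigenvectorUnitary hC : Matrix n n ℂ) = evU hC from rfl,
      conj_diag_entry, Complex.ofReal_re]
  have hexp : ∀ k, ((NormedSpace.exp C) k k).re
      = ∑ j, Complex.normSq (evU hC k j) * Real.exp (hC.eigenvalues j) := by
    intro k
    rw [exp_hermitian hC, conj_diag_entry, Complex.ofReal_re]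
  have htr : (NormedSpace.exp C).trace.re = ∑ k, ((NormedSpace.exp C) k k).re := by
    rw [Matrix.trace]
    exact Complex.re_sum _ _
  rw [htr]
  refine Finset.sum_le_sum fun k _ => ?_
  rw [hdiag k, hexp k]
  have hjen := (convexOn_exp).map_sum_le (t := Finset.univ)
    (w := fun j => Complex.normSq (evU hC k j)) (p := fun j => hC.eigenvalues j)
    (fun j _ => Complex.normSq_nonneg _) (normSq_row_sum hC k)
    (fun j _ => Set.mem_univ _)
  simpa [smul_eq_mul] using hjen

lemma psd_diag_re_nonneg {Q : Matrix n n ℂ} (hQ : Q.PosSemidef) (k : n) :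
    0 ≤ (Q k k).re := by
  have h : 0 ≤ Q k k := hQ.diag_nonneg
  exact (Complex.le_def.mp h).1

lemma trace_exp_mono {A B : Matrix n n ℂ} (hA : A.IsHermitian)
    (hP : (B - A).PosSemidef) :
    (NormedSpace.exp A).trace.re ≤ (NormedSpace.exp B).trace.re := by
  have hB : B.IsHermitian := by
    have := hP.1.add hA
    rwa [sub_add_cancel] at this
  set U := evU hA with hU
  have hCherm : (star U * B * U).IsHermitian := by
    rw [Matrix.star_eq_conjTranspose]
    exact Matrix.isHermitian_conjTranspose_mul_mul U hB
  have htr : (NormedSpace.exp (star U * B * U)).trace = (NormedSpace.exp B).trace := by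
    rw [← evU_inv hA, Matrix.exp_conj' (evU hA) _ (evU_isUnit hA), Matrix.trace_mul_cycle,
      evU_inv hA, evU_mul_star hA, Matrix.one_mul]
  have hdiag : ∀ k, hA.eigenvalues k ≤ ((star U * B * U) k k).re := by
    intro k
    have hsplit : star U * B * U
        = Matrix.diagonal (fun j => ((hA.eigenvalues j : ℝ) : ℂ)) + star U * (B - A) * U := by
      have h1 : star U * A * U = Matrix.diagonal (fun j => ((hA.eigenvalues j : ℝ) : ℂ)) :=
        by
          have h0 := hA.conjStarAlgAut_star_eigenvectorUnitary
          rw [Unitary.conjStarAlgAut_apply, Unitary.coe_star, star_star] at h0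
          exact h0
      rw [← h1]
      rw [Matrix.mul_sub, Matrix.sub_mul]
      abel
    rw [hsplit]
    have hpsd : (star U * (B - A) * U).PosSemidef := by
      rw [Matrix.star_eq_conjTranspose]
      exact hP.conjTranspose_mul_mul_same U
    have := psd_diag_re_nonneg hpsd k
    simp only [Matrix.add_apply, Complex.add_re, Matrix.diagonal_apply_eq, Complex.ofReal_re]
    linarith
  calc (NormedSpace.exp A).trace.re = ∑ k, Real.exp (hA.eigenvalues k) := by
        rw [trace_exp_eq hA, Complex.ofReal_re]
    _ ≤ ∑ k, Real.exp (((star U * B * U) k k).re) :=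
        Finset.sum_le_sum fun k _ => Real.exp_le_exp.mpr (hdiag k)
    _ ≤ (NormedSpace.exp (star U * B * U)).trace.re := peierls hCherm
    _ = (NormedSpace.exp B).trace.re := by rw [htr]

lemma trace_exp_add_smul_one (M : Matrix n n ℂ) (r : ℝ) :
    (NormedSpace.exp (M + (r : ℂ) • 1)).trace.re
      = Real.exp r * (NormedSpace.exp M).trace.re := by
  have hc : Commute M ((r : ℂ) • (1 : Matrix n n ℂ)) := (Commute.one_right M).smul_right r
  rw [Matrix.exp_add_of_commute M ((r:ℂ) • 1) hc]
  have h1 : ((r : ℂ) • (1 : Matrix n n ℂ)) = Matrix.diagonal (fun _ => (r : ℂ)) := by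
    rw [Matrix.smul_one_eq_diagonal]
  rw [h1, Matrix.exp_diagonal,
    show (NormedSpace.exp fun _ : n => (r:ℂ)) = fun _ : n => Complex.exp r from by
      funext i; rw [Pi.exp_def, ← Complex.exp_eq_exp_ℂ],
    show (Matrix.diagonal fun _ : n => Complex.exp r) = Complex.exp r • (1 : Matrix n n ℂ) from by
      rw [Matrix.smul_one_eq_diagonal],
    Matrix.mul_smul, Matrix.mul_one, Matrix.trace_smul, smul_eq_mul, ← Complex.ofReal_exp,
    Complex.re_ofReal_mul]

lemma key_log_bound [Nonempty n] {A B : Matrix n n ℂ} (hA : A.IsHermitian) (hB : B.IsHermitian)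
    (t : ℝ) (h1 : ((t : ℂ) • 1 - (A - B)).PosSemidef) (h2 : ((t : ℂ) • 1 - (B - A)).PosSemidef) :
    |Real.log (NormedSpace.exp A).trace.re - Real.log (NormedSpace.exp B).trace.re| ≤ t := by
  have hTA := trace_exp_re_pos hA
  have hTB := trace_exp_re_pos hB
  have hherm1 : ((t : ℂ) • (1 : Matrix n n ℂ)).IsHermitian := by
    simp [Matrix.IsHermitian, Matrix.conjTranspose_smul, Complex.conj_ofReal]
  have e1 : (NormedSpace.exp A).trace.re
      ≤ Real.exp t * (NormedSpace.exp B).trace.re := by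
    have hm := trace_exp_mono hA (B := B + (t:ℂ) • 1) (by
      have hh : (B + (t:ℂ) • (1 : Matrix n n ℂ)) - A = (t:ℂ) • 1 - (A - B) := by abel
      rw [hh]; exact h1)
    rwa [trace_exp_add_smul_one] at hm
  have e2 : (NormedSpace.exp B).trace.re
      ≤ Real.exp t * (NormedSpace.exp A).trace.re := by
    have hm := trace_exp_mono hB (B := A + (t:ℂ) • 1) (by
      have hh : (A + (t:ℂ) • (1 : Matrix n n ℂ)) - B = (t:ℂ) • 1 - (B - A) := by abel
      rw [hh]; exact h2)
    rwa [trace_exp_add_smul_one] at hm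
  have l1 : Real.log (NormedSpace.exp A).trace.re
      ≤ t + Real.log (NormedSpace.exp B).trace.re := by
    have hl := Real.log_le_log hTA e1
    rwa [Real.log_mul (ne_of_gt (Real.exp_pos t)) (ne_of_gt hTB), Real.log_exp] at hl
  have l2 : Real.log (NormedSpace.exp B).trace.re
      ≤ t + Real.log (NormedSpace.exp A).trace.re := by
    have hl := Real.log_le_log hTB e2
    rwa [Real.log_mul (ne_of_gt (Real.exp_pos t)) (ne_of_gt hTA), Real.log_exp] at hl
  exact abs_le.mpr ⟨by linarith, by linarith⟩


/-! ### Combinatorics -/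

def Sx {L : ℕ} (x : Fin L → Fin 2) : Finset (Fin L) := Finset.univ.filter (fun v => x v = 0)

lemma pairS_eq_pm {L : ℕ} (x : Fin L → Fin 2) (e : Sym2 (Fin L)) :
    pairS e x = if (∀ v ∈ e, v ∈ Sx x) ∨ (∀ v ∈ e, v ∈ (Sx x)ᶜ) then (1:ℝ) else -1 := by
  induction e using Sym2.ind with
  | _ v w =>
      rw [pairS, Sym2.lift_mk]
      have hmem : ∀ u : Fin L, (u ∈ Sx x ↔ x u = 0) := fun u => by simp [Sx]
      have hmemc : ∀ u : Fin L, (u ∈ (Sx x)ᶜ ↔ x u = 1) := fun u => by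
        simp [Sx, Finset.mem_compl]
        omega
      simp only [Sym2.mem_iff, forall_eq_or_imp, forall_eq]
      rw [pairFn]
      have hcases : ∀ i : Fin 2, i = 0 ∨ i = 1 := by decide
      rcases hcases (x v) with hv | hv <;> rcases hcases (x w) with hw | hw <;>
        simp [sg, hmem, hmemc, hv, hw]

lemma edgeFn_eq {L : ℕ} (G : SimpleGraph (Fin L)) [DecidableRel G.Adj] (x : Fin L → Fin 2) :
    edgeFn G x = 2 * ((edgesWithin L G (Sx x) : ℝ) + (edgesWithin L G (Sx x)ᶜ : ℝ))
      - (G.edgeFinset.card : ℝ) := by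
  classical
  rw [edgeFn, Finset.sum_congr rfl (fun e _ => pairS_eq_pm x e), Finset.sum_ite,
    Finset.sum_const, Finset.sum_const]
  have hsplit : (G.edgeFinset.filter
        fun e => (∀ v ∈ e, v ∈ Sx x) ∨ (∀ v ∈ e, v ∈ (Sx x)ᶜ)).card
      = edgesWithin L G (Sx x) + edgesWithin L G (Sx x)ᶜ := by
    rw [Finset.filter_or, Finset.card_union_of_disjoint, edgesWithin, edgesWithin]
    rw [Finset.disjoint_filter]
    intro e he h1 h2
    obtain ⟨v, hv⟩ : ∃ v, v ∈ e := ⟨e.out.1, Sym2.out_fst_mem e⟩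
    exact absurd (h1 v hv) (by simpa using (Finset.mem_compl.mp (h2 v hv)))
  have htot := Finset.card_filter_add_card_filter_not
    (s := G.edgeFinset) (p := fun e => (∀ v ∈ e, v ∈ Sx x) ∨ (∀ v ∈ e, v ∈ (Sx x)ᶜ))
  have hcards : (G.edgeFinset.filter
        fun e => ¬((∀ v ∈ e, v ∈ Sx x) ∨ (∀ v ∈ e, v ∈ (Sx x)ᶜ))).card
      = G.edgeFinset.card - (edgesWithin L G (Sx x) + edgesWithin L G (Sx x)ᶜ) := by
    omega
  rw [hsplit, hcards]
  have hle : edgesWithin L G (Sx x) + edgesWithin L G (Sx x)ᶜ ≤ G.edgeFinset.card := by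
    rw [← hsplit]
    exact Finset.card_filter_le _ _
  simp only [nsmul_eq_mul]
  rw [Nat.cast_sub hle]
  push_cast
  ring

lemma edgesWithin_univ {L : ℕ} (G : SimpleGraph (Fin L)) [DecidableRel G.Adj] :
    edgesWithin L G Finset.univ = G.edgeFinset.card := by
  rw [edgesWithin]
  congr 1
  exact Finset.filter_true_of_mem fun e _ => by simp

lemma edgesWithin_top {L : ℕ} (S : Finset (Fin L)) :
    edgesWithin L (⊤ : SimpleGraph (Fin L)) S = S.card.choose 2 := by
  classical
  rw [edgesWithin, ← Sym2.card_image_offDiag S]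
  congr 1
  ext e
  induction e using Sym2.ind with
  | _ v w =>
      simp only [Finset.mem_filter, SimpleGraph.mem_edgeFinset, SimpleGraph.mem_edgeSet,
        SimpleGraph.top_adj, Finset.mem_image, Finset.mem_offDiag, Sym2.mem_iff,
        forall_eq_or_imp, forall_eq]
      constructor
      · rintro ⟨hvw, hv, hw⟩
        exact ⟨(v, w), ⟨hv, hw, hvw⟩, rfl⟩
      · rintro ⟨⟨a, b⟩, ⟨ha, hb, hab⟩, he⟩
        rw [show Function.uncurry Sym2.mk (a, b) = s(a, b) from rfl, Sym2.eq_iff] at he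
        rcases he with ⟨rfl, rfl⟩ | ⟨rfl, rfl⟩
        · exact ⟨hab, ha, hb⟩
        · exact ⟨fun h => hab h.symm, hb, ha⟩


set_option maxHeartbeats 1000000 in
lemma core_estimate (p c : ℝ) (hp0 : 0 < p) (hc : 0 < c)
    (L : ℕ) (hL2 : 2 ≤ L) (hLbig : (8 * c / p) ^ 2 ≤ (L : ℝ))
    (NG a b m' : ℝ) (hm0 : 0 ≤ m') (hmL : m' ≤ (L : ℝ))
    (hra : |a - p * (m' * (m' - 1) / 2)| ≤ c * (L : ℝ) ^ ((3 : ℝ) / 2))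
    (hrb : |b - p * (((L:ℝ) - m') * (((L:ℝ) - m') - 1) / 2)| ≤ c * (L : ℝ) ^ ((3 : ℝ) / 2))
    (hrN : |NG - p * ((L:ℝ) * ((L:ℝ) - 1) / 2)| ≤ c * (L : ℝ) ^ ((3 : ℝ) / 2)) :
    |((L:ℝ) / NG) * (2 * (a + b) - NG)
        - ((L:ℝ) / ((L:ℝ) * ((L:ℝ) - 1) / 2)) * (2 * (m' * (m' - 1) / 2
            + ((L:ℝ) - m') * (((L:ℝ) - m') - 1) / 2) - (L:ℝ) * ((L:ℝ) - 1) / 2)|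
      ≤ (48 * c / p) * ((L:ℝ) * (L : ℝ) ^ (-(1 : ℝ) / 2)) := by
  set Lr := (L : ℝ) with hLr
  have hL2' : (2:ℝ) ≤ Lr := by rw [hLr]; exact_mod_cast hL2
  have hL0 : (0:ℝ) < Lr := by linarith
  set s := Lr ^ ((1:ℝ)/2) with hs
  set y := Lr ^ (-(1:ℝ)/2) with hy
  have hs0 : 0 < s := Real.rpow_pos_of_pos hL0 _
  have hy0 : 0 < y := Real.rpow_pos_of_pos hL0 _
  have hss : s * s = Lr := by
    rw [hs, ← Real.rpow_add hL0]; norm_num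
  have h32 : Lr ^ ((3:ℝ)/2) = Lr * s := by
    rw [hs, show Lr * Lr ^ ((1:ℝ)/2) = Lr ^ ((1:ℝ)) * Lr ^ ((1:ℝ)/2) by rw [Real.rpow_one],
      ← Real.rpow_add hL0]
    norm_num
  have hs_eq : s = Lr * y := by
    rw [hy, hs]
    rw [show Lr * Lr ^ (-(1:ℝ)/2) = Lr ^ ((1:ℝ)) * Lr ^ (-(1:ℝ)/2) by rw [Real.rpow_one],
      ← Real.rpow_add hL0]
    norm_num
  have h8c : 8 * c ≤ p * s := by
    have h1 : (8 * c / p) ^ 2 ≤ s * s := by rw [hss]; exact hLbig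
    have h2 : 8 * c / p ≤ s := by nlinarith [sq_nonneg (8 * c / p - s), sq_nonneg (8 * c / p + s)]
    calc 8 * c = (8 * c / p) * p := by field_simp
      _ ≤ s * p := mul_le_mul_of_nonneg_right h2 hp0.le
      _ = p * s := mul_comm _ _
  set M := Lr * (Lr - 1) / 2 with hM
  have hM4 : Lr ^ 2 / 4 ≤ M := by rw [hM]; nlinarith
  have hMpos : 0 < M := by nlinarith
  have hcLs : c * (Lr * s) ≤ p * Lr ^ 2 / 8 := by
    have h := mul_le_mul_of_nonneg_right h8c (mul_nonneg hL0.le hs0.le)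
    have h2 : p * s * (Lr * s) = p * Lr ^ 2 := by
      calc p * s * (Lr * s) = p * Lr * (s * s) := by ring
        _ = p * Lr * Lr := by rw [hss]
        _ = p * Lr ^ 2 := by ring
    linarith
  have hpM : p * (Lr ^ 2 / 4) ≤ p * M := mul_le_mul_of_nonneg_left hM4 hp0.le
  have hNG : p * M / 2 ≤ NG := by
    have h := (abs_le.mp hrN).1
    rw [h32] at h
    linarith
  have hNGpos : 0 < NG := by
    have := mul_pos hp0 hMpos
    linarith
  set k₁ := m' * (m' - 1) / 2 with hk1
  set k₂ := (Lr - m') * ((Lr - m') - 1) / 2 with hk2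
  have hkM : k₁ + k₂ ≤ M := by rw [hk1, hk2, hM]; nlinarith
  have hk0 : 0 ≤ k₁ + k₂ := by
    rw [hk1, hk2]
    nlinarith [sq_nonneg (2 * m' - Lr)]
  rw [h32] at hra hrb hrN
  have hnum : |M * (a + b) - NG * (k₁ + k₂)| ≤ 3 * c * (Lr * s) * M := by
    have e : M * (a + b) - NG * (k₁ + k₂)
        = M * (a - p * k₁) + M * (b - p * k₂) - (NG - p * M) * (k₁ + k₂) := by ring
    rw [e]
    have t1 : |M * (a - p * k₁)| ≤ M * (c * (Lr * s)) := by
      rw [abs_mul, abs_of_pos hMpos]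
      exact mul_le_mul_of_nonneg_left hra hMpos.le
    have t2 : |M * (b - p * k₂)| ≤ M * (c * (Lr * s)) := by
      rw [abs_mul, abs_of_pos hMpos]
      exact mul_le_mul_of_nonneg_left hrb hMpos.le
    have t3 : |(NG - p * M) * (k₁ + k₂)| ≤ (c * (Lr * s)) * M := by
      rw [abs_mul, abs_of_nonneg hk0]
      exact mul_le_mul hrN hkM hk0 (by positivity)
    calc |M * (a - p * k₁) + M * (b - p * k₂) - (NG - p * M) * (k₁ + k₂)|
        ≤ |M * (a - p * k₁) + M * (b - p * k₂)| + |(NG - p * M) * (k₁ + k₂)| :=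
          abs_sub _ _
      _ ≤ |M * (a - p * k₁)| + |M * (b - p * k₂)| + |(NG - p * M) * (k₁ + k₂)| := by
          have := abs_add_le (M * (a - p * k₁)) (M * (b - p * k₂))
          linarith
      _ ≤ 3 * c * (Lr * s) * M := by linarith
  have hΔ : (Lr / NG) * (2 * (a + b) - NG) - (Lr / M) * (2 * (k₁ + k₂) - M)
      = 2 * Lr * ((M * (a + b) - NG * (k₁ + k₂)) / (NG * M)) := by
    field_simp
    ring
  rw [hΔ, abs_mul, abs_div, abs_of_nonneg (show (0:ℝ) ≤ 2 * Lr by positivity),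
    abs_of_pos (mul_pos hNGpos hMpos)]
  have step1 : 2 * Lr * (|M * (a + b) - NG * (k₁ + k₂)| / (NG * M))
      ≤ 2 * Lr * ((3 * c * (Lr * s) * M) / (NG * M)) := by
    gcongr
  refine step1.trans ?_
  have heq : 2 * Lr * ((3 * c * (Lr * s) * M) / (NG * M)) = 6 * c * Lr ^ 2 * s / NG := by
    field_simp
    ring
  rw [heq, div_le_iff₀ hNGpos]
  have hNG8 : p * Lr ^ 2 / 8 ≤ NG := by linarith
  rw [hs_eq]
  have hfinal : 48 * c / p * (Lr * y) * (p * Lr ^ 2 / 8) = 6 * c * Lr ^ 2 * (Lr * y) := by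
    field_simp
    ring
  nlinarith [mul_le_mul_of_nonneg_left hNG8
    (show (0:ℝ) ≤ 48 * c / p * (Lr * y) by positivity)]



end CutReg

open CutReg in
open scoped ComplexOrder in
set_option maxHeartbeats 1600000 in
/-- finite-size deterministic form of Theorem 1, spin 1/2. -/
theorem cut_regular_free_energy (p c : ℝ) (hp0 : 0 < p) (hp1 : p ≤ 1) (hc : 0 < c) :
    ∃ C : ℝ, 0 < C ∧ ∃ L₀ : ℕ, ∀ (β : ℝ), 0 < β → ∀ (J w : Fin 3 → ℝ), ∀ L : ℕ, L₀ ≤ L →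
      ∀ (G : SimpleGraph (Fin L)) [DecidableRel G.Adj],
        (∀ S : Finset (Fin L),
            |(edgesWithin L G S : ℝ) - p * (S.card : ℝ) * ((S.card : ℝ) - 1) / 2|
              ≤ c * (L : ℝ) ^ ((3 : ℝ) / 2)) →
        |freeEnergy L β (ham L J w G) - freeEnergy L β (ham L J w (⊤ : SimpleGraph (Fin L)))|
          ≤ C * (|J 0| + |J 1| + |J 2|) * (L : ℝ) ^ (-(1 : ℝ) / 2) := by
  refine ⟨48 * c / p, by positivity, max 2 (⌈(8 * c / p) ^ 2⌉₊ + 1), ?_⟩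
  intro β hβ J w L hL G _ hreg
  classical
  have hL2 : 2 ≤ L := le_trans (le_max_left _ _) hL
  have hL2' : (2:ℝ) ≤ (L:ℝ) := by exact_mod_cast hL2
  have hL0 : (0:ℝ) < (L:ℝ) := by linarith
  have hLbig : (8 * c / p) ^ 2 ≤ (L : ℝ) := by
    have h1 : (⌈(8 * c / p) ^ 2⌉₊ + 1 : ℕ) ≤ L := le_trans (le_max_right _ _) hL
    calc (8 * c / p) ^ 2 ≤ (⌈(8 * c / p) ^ 2⌉₊ : ℝ) := Nat.le_ceil _
      _ ≤ ((⌈(8 * c / p) ^ 2⌉₊ + 1 : ℕ) : ℝ) := by push_cast; linarith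
      _ ≤ (L : ℝ) := by exact_mod_cast h1
  have hy0 : 0 < (L:ℝ) ^ (-(1:ℝ)/2) := Real.rpow_pos_of_pos hL0 _
  set y := (L:ℝ) ^ (-(1:ℝ)/2) with hy
  set r := 48 * c / p * ((L:ℝ) * y) with hr
  have hr0 : 0 ≤ r := by
    rw [hr]
    positivity
  set Mc := (⊤ : SimpleGraph (Fin L)).edgeFinset.card with hMc
  have hMcard : ((Mc : ℕ) : ℝ) = (L:ℝ) * ((L:ℝ) - 1) / 2 := by
    rw [hMc, SimpleGraph.card_edgeFinset_top_eq_card_choose_two, Fintype.card_fin,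
      Nat.cast_choose_two]
  set NG := G.edgeFinset.card with hNG
  -- core per-configuration bound
  have hDelta : ∀ x : Fin L → Fin 2,
      |((L:ℝ)/(NG:ℝ)) * edgeFn G x - ((L:ℝ)/((Mc:ℕ):ℝ)) * edgeFn (⊤ : SimpleGraph (Fin L)) x|
        ≤ r := by
    intro x
    have hmle : (Sx x).card ≤ L := by
      simpa using Finset.card_le_univ (Sx x)
    have hcompl : (((Sx x)ᶜ : Finset (Fin L)).card : ℝ) = (L:ℝ) - ((Sx x).card : ℝ) := by
      rw [Finset.card_compl, Fintype.card_fin, Nat.cast_sub hmle]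
    have hedgeG := edgeFn_eq G x
    have hedgeT := edgeFn_eq (⊤ : SimpleGraph (Fin L)) x
    rw [edgesWithin_top, edgesWithin_top] at hedgeT
    have hk1 : (((Sx x).card.choose 2 : ℕ) : ℝ)
        = ((Sx x).card : ℝ) * (((Sx x).card : ℝ) - 1) / 2 := by rw [Nat.cast_choose_two]
    have hk2 : ((((Sx x)ᶜ : Finset (Fin L)).card.choose 2 : ℕ) : ℝ)
        = ((L:ℝ) - ((Sx x).card : ℝ)) * (((L:ℝ) - ((Sx x).card : ℝ)) - 1) / 2 := by
      rw [Nat.cast_choose_two, hcompl]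
    have hra : |(edgesWithin L G (Sx x) : ℝ)
        - p * (((Sx x).card : ℝ) * (((Sx x).card : ℝ) - 1) / 2)| ≤ c * (L : ℝ) ^ ((3:ℝ)/2) := by
      rw [show p * (((Sx x).card : ℝ) * (((Sx x).card : ℝ) - 1) / 2)
          = p * ((Sx x).card : ℝ) * (((Sx x).card : ℝ) - 1) / 2 by ring]
      exact hreg (Sx x)
    have hrb : |(edgesWithin L G ((Sx x)ᶜ) : ℝ)
        - p * (((L:ℝ) - ((Sx x).card : ℝ)) * (((L:ℝ) - ((Sx x).card : ℝ)) - 1) / 2)|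
          ≤ c * (L : ℝ) ^ ((3:ℝ)/2) := by
      have h := hreg ((Sx x)ᶜ)
      rw [hcompl] at h
      rw [show p * (((L:ℝ) - ((Sx x).card : ℝ)) * (((L:ℝ) - ((Sx x).card : ℝ)) - 1) / 2)
          = p * ((L:ℝ) - ((Sx x).card : ℝ)) * (((L:ℝ) - ((Sx x).card : ℝ)) - 1) / 2 by ring]
      exact h
    have hrN : |(NG : ℝ) - p * ((L:ℝ) * ((L:ℝ) - 1) / 2)| ≤ c * (L : ℝ) ^ ((3:ℝ)/2) := by
      have h := hreg Finset.univ
      rw [edgesWithin_univ, Finset.card_univ, Fintype.card_fin] at h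
      rw [show p * ((L:ℝ) * ((L:ℝ) - 1) / 2) = p * (L:ℝ) * ((L:ℝ) - 1) / 2 by ring]
      exact h
    have hcore := core_estimate p c hp0 hc L hL2 hLbig (NG : ℝ)
      (edgesWithin L G (Sx x) : ℝ) (edgesWithin L G ((Sx x)ᶜ) : ℝ) ((Sx x).card : ℝ)
      (by positivity) (by exact_mod_cast hmle) hra hrb hrN
    rw [hedgeG, hedgeT, hMcard, hk1, hk2]
    exact hcore
  -- difference bound for the decomposed Hamiltonian coefficients
  have hD : ∀ (α : Fin 3) (x : Fin L → Fin 2),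
      |hamF L J w G α x - hamF L J w (⊤ : SimpleGraph (Fin L)) α x| ≤ |J α| * r := by
    intro α x
    have hdiff : hamF L J w G α x - hamF L J w (⊤ : SimpleGraph (Fin L)) α x
        = J α * (((L:ℝ)/(NG:ℝ)) * edgeFn G x
            - ((L:ℝ)/((Mc:ℕ):ℝ)) * edgeFn (⊤ : SimpleGraph (Fin L)) x) := by
      rw [hamF, hamF]
      ring
    rw [hdiff, abs_mul]
    exact mul_le_mul_of_nonneg_left (hDelta x) (abs_nonneg _)
  -- matrix level
  set t := β * ((|J 0| + |J 1| + |J 2|) * r) with ht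
  have hXeq : (-β : ℂ) • ham L J w G
      = ∑ α, conjE L α (fun x => -β * hamF L J w G α x) := by
    rw [ham_eq, Finset.smul_sum]
    refine Finset.sum_congr rfl fun α _ => ?_
    rw [show ((-β : ℂ)) = ((-β : ℝ) : ℂ) by push_cast; ring, conjE_smul]
  have hYeq : (-β : ℂ) • ham L J w (⊤ : SimpleGraph (Fin L))
      = ∑ α, conjE L α (fun x => -β * hamF L J w (⊤ : SimpleGraph (Fin L)) α x) := by
    rw [ham_eq, Finset.smul_sum]
    refine Finset.sum_congr rfl fun α _ => ?_
    rw [show ((-β : ℂ)) = ((-β : ℝ) : ℂ) by push_cast; ring, conjE_smul]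
  have hXh : ((-β : ℂ) • ham L J w G).IsHermitian := by
    rw [hXeq]; exact isHermitian_sum _ _ fun α _ => conjE_herm α _
  have hYh : ((-β : ℂ) • ham L J w (⊤ : SimpleGraph (Fin L))).IsHermitian := by
    rw [hYeq]; exact isHermitian_sum _ _ fun α _ => conjE_herm α _
  have honeeq : ((t : ℝ) : ℂ) • (1 : Matrix (Fin L → Fin 2) (Fin L → Fin 2) ℂ)
      = ∑ α : Fin 3, conjE L α (fun _ => β * (|J α| * r)) := by
    rw [Finset.sum_congr rfl (fun α _ => conjE_const α (β * (|J α| * r)))]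
    rw [← Finset.sum_smul]
    congr 1
    rw [Fin.sum_univ_three, ht]
    push_cast
    ring
  have hpos : ∀ (sgn : ℝ), |sgn| = 1 → (((t : ℝ) : ℂ) • 1
      - ∑ α, conjE L α (fun x => sgn * (-β * hamF L J w G α x
          - -β * hamF L J w (⊤ : SimpleGraph (Fin L)) α x))).PosSemidef := by
    intro sgn hsgn
    rw [honeeq, ← Finset.sum_sub_distrib]
    refine posSemidef_sum _ _ fun α _ => ?_
    rw [conjE_sub]
    refine conjE_psd α _ fun x => ?_
    have hb := hD α x
    rw [abs_le] at hb
    have hs1 : sgn = 1 ∨ sgn = -1 := by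
      rcases le_or_gt 0 sgn with h | h
      · left; rwa [abs_of_nonneg h] at hsgn
      · right; rw [abs_of_neg h] at hsgn; linarith
    have hexp : sgn * (-β * hamF L J w G α x
        - -β * hamF L J w (⊤ : SimpleGraph (Fin L)) α x)
        = -(sgn * β) * (hamF L J w G α x - hamF L J w (⊤ : SimpleGraph (Fin L)) α x) := by
      ring
    rcases hs1 with h | h <;>
      · rw [hexp, h]
        nlinarith [hβ.le, hb.1, hb.2,
          mul_le_mul_of_nonneg_left hb.1 hβ.le, mul_le_mul_of_nonneg_left hb.2 hβ.le]
  have h1 : (((t : ℝ) : ℂ) • 1 - ((-β : ℂ) • ham L J w G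
      - (-β : ℂ) • ham L J w (⊤ : SimpleGraph (Fin L)))).PosSemidef := by
    have h := hpos 1 (by norm_num)
    rw [Finset.sum_congr rfl (fun α _ => conjE_congr α
      (d' := fun x => -β * hamF L J w G α x
        - -β * hamF L J w (⊤ : SimpleGraph (Fin L)) α x)
      (fun x => by rw [one_mul]))] at h
    rw [hXeq, hYeq, ← Finset.sum_sub_distrib,
      Finset.sum_congr rfl (fun α _ => conjE_sub α _ _)]
    exact h
  have h2 : (((t : ℝ) : ℂ) • 1 - ((-β : ℂ) • ham L J w (⊤ : SimpleGraph (Fin L))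
      - (-β : ℂ) • ham L J w G)).PosSemidef := by
    have h := hpos (-1) (by norm_num)
    rw [Finset.sum_congr rfl (fun α _ => conjE_congr α
      (d' := fun x => -β * hamF L J w (⊤ : SimpleGraph (Fin L)) α x
        - -β * hamF L J w G α x)
      (fun x => by ring))] at h
    rw [hYeq, hXeq, ← Finset.sum_sub_distrib,
      Finset.sum_congr rfl (fun α _ => conjE_sub α _ _)]
    exact h
  have hkey := key_log_bound hXh hYh t h1 h2
  -- final arithmetic
  rw [freeEnergy, freeEnergy]
  have harr : -(1 / ((L:ℝ) * β)) * Real.log ((NormedSpace.exp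
        ((-β : ℂ) • ham L J w G)).trace).re
      - -(1 / ((L:ℝ) * β)) * Real.log ((NormedSpace.exp
        ((-β : ℂ) • ham L J w (⊤ : SimpleGraph (Fin L)))).trace).re
      = -(1 / ((L:ℝ) * β)) * (Real.log ((NormedSpace.exp
        ((-β : ℂ) • ham L J w G)).trace).re
        - Real.log ((NormedSpace.exp
        ((-β : ℂ) • ham L J w (⊤ : SimpleGraph (Fin L)))).trace).re) := by
    ring
  rw [harr, abs_mul, abs_neg, abs_of_pos (show (0:ℝ) < 1 / ((L:ℝ) * β) by positivity)]
  calc 1 / ((L:ℝ) * β) * |Real.log _ - Real.log _|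
      ≤ 1 / ((L:ℝ) * β) * t := by
        exact mul_le_mul_of_nonneg_left hkey (by positivity)
    _ = 48 * c / p * (|J 0| + |J 1| + |J 2|) * y := by
        rw [ht, hr]
        field_simp
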